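/- Let Ω ⊆ ℂ be open, let σ : Ω → ℝ be of class C² with σ(z) > 0 for all z ∈ Ω, and let F : Ω → ℂ be of class C². Suppose that ∂/∂z (σ·∂F/∂z̄) + ∂/∂z̄ (σ·∂F/∂z) = 0 on Ω (the planar form of the conductivity equation d(σ d^c F) = 0). Then the functions F₁ := √σ·∂F/∂z and F₂ := √σ·∂F/∂z̄ satisfy the first-order system ∂F₁/∂z̄ + F₂·∂(log √σ)/∂z = 0 and ∂F₂/∂z + F₁·∂(log √σ)/∂z̄ = 0 on Ω. -/

import Mathlib

open Complex MeasureTheory Filter Topology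

/-- Wirtinger derivative `∂f/∂z`. -/
noncomputable def wdz (f : ℂ → ℂ) (z : ℂ) : ℂ :=
  (1 / 2) * ((fderiv ℝ f z) 1 - Complex.I • (fderiv ℝ f z) Complex.I)

/-- Wirtinger derivative `∂f/∂z̄`. -/
noncomputable def wdzbar (f : ℂ → ℂ) (z : ℂ) : ℂ :=
  (1 / 2) * ((fderiv ℝ f z) 1 + Complex.I • (fderiv ℝ f z) Complex.I)

/-- `√σ` as a complex-valued function. -/
noncomputable def sqrtC (σ : ℂ → ℝ) (z : ℂ) : ℂ := (Real.sqrt (σ z) : ℂ)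

/-- The conductivity-type potential `Q = (√σ)_{z z̄} / √σ`. -/
noncomputable def Qpot (σ : ℂ → ℝ) (z : ℂ) : ℂ :=
  wdz (fun w => wdzbar (sqrtC σ) w) z / sqrtC σ z

/-- `g` has an `L^p` tail: `∫_{|z| ≥ 1} |g|^p dA < ∞`. -/
def HasLpTail (p : ℝ) (g : ℂ → ℂ) : Prop :=
  MeasureTheory.IntegrableOn (fun z => ‖g z‖ ^ p)
    {z : ℂ | 1 ≤ ‖z‖} MeasureTheory.volume

/-- `e_λ(z) = exp(λz - conj λ · conj z)`, a function of modulus 1. -/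
noncomputable def expPos (lam z : ℂ) : ℂ :=
  Complex.exp (lam * z - (starRingEnd ℂ) lam * (starRingEnd ℂ) z)

/-- `e_{-λ}(z) = exp(conj λ · conj z - λz)`, a function of modulus 1. -/
noncomputable def expNeg (lam z : ℂ) : ℂ :=
  Complex.exp ((starRingEnd ℂ) lam * (starRingEnd ℂ) z - lam * z)

/-! By the product and chain rules (`∂̄√σ = ∂̄σ / (2√σ)`, `∂ log √σ = ∂σ / (2σ)`) and the equality
of the mixed derivatives `∂̄∂F = ∂∂̄F`, both left-hand sides of the first-order system equal
`(∂σ ∂̄F + ∂̄σ ∂F + 2σ ∂∂̄F) / (2√σ)`, the conductivity expression divided by `2√σ`. -/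

section Wirtinger

variable {f g : ℂ → ℂ} {z : ℂ}

lemma wdz_mul (hf : DifferentiableAt ℝ f z) (hg : DifferentiableAt ℝ g z) :
    wdz (fun w => f w * g w) z = f z * wdz g z + g z * wdz f z := by
  simp only [wdz, fderiv_fun_mul hf hg, add_apply, smul_apply, smul_eq_mul]
  ring

lemma wdzbar_mul (hf : DifferentiableAt ℝ f z) (hg : DifferentiableAt ℝ g z) :
    wdzbar (fun w => f w * g w) z = f z * wdzbar g z + g z * wdzbar f z := by
  simp only [wdzbar, fderiv_fun_mul hf hg, add_apply, smul_apply, smul_eq_mul]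
  ring

lemma fderiv_ofReal_comp {u : ℂ → ℝ} {h : ℝ → ℝ} {h' : ℝ}
    (hu : DifferentiableAt ℝ u z) (hh : HasDerivAt h h' (u z)) :
    fderiv ℝ (fun w => (h (u w) : ℂ)) z = h' • fderiv ℝ (fun w => (u w : ℂ)) z := by
  have hcomp : HasFDerivAt (fun w => (h (u w) : ℂ)) (ofRealCLM.comp (h' • fderiv ℝ u z)) z :=
    ofRealCLM.hasFDerivAt.comp z (hh.comp_hasFDerivAt z hu.hasFDerivAt)
  have hu' : HasFDerivAt (fun w => (u w : ℂ)) (ofRealCLM.comp (fderiv ℝ u z)) z :=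
    ofRealCLM.hasFDerivAt.comp z hu.hasFDerivAt
  rw [hcomp.fderiv, hu'.fderiv, ContinuousLinearMap.comp_smul]

lemma wdz_ofReal_comp {u : ℂ → ℝ} {h : ℝ → ℝ} {h' : ℝ}
    (hu : DifferentiableAt ℝ u z) (hh : HasDerivAt h h' (u z)) :
    wdz (fun w => (h (u w) : ℂ)) z = h' * wdz (fun w => (u w : ℂ)) z := by
  simp only [wdz, fderiv_ofReal_comp hu hh, smul_apply, smul_eq_mul, real_smul]
  ring

lemma wdzbar_ofReal_comp {u : ℂ → ℝ} {h : ℝ → ℝ} {h' : ℝ}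
    (hu : DifferentiableAt ℝ u z) (hh : HasDerivAt h h' (u z)) :
    wdzbar (fun w => (h (u w) : ℂ)) z = h' * wdzbar (fun w => (u w : ℂ)) z := by
  simp only [wdzbar, fderiv_ofReal_comp hu hh, smul_apply, smul_eq_mul, real_smul]
  ring

lemma hasFDerivAt_fderiv_of_contDiffAt_two (hf : ContDiffAt ℝ 2 f z) :
    HasFDerivAt (fderiv ℝ f) (fderiv ℝ (fderiv ℝ f) z) z :=
  ((hf.fderiv_right (m := 1) le_rfl).differentiableAt one_ne_zero).hasFDerivAt

lemma hasFDerivAt_wdz (hf : ContDiffAt ℝ 2 f z) :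
    HasFDerivAt (wdz f) ((1 / 2 : ℂ) • ((fderiv ℝ (fderiv ℝ f) z).flip 1 -
      I • (fderiv ℝ (fderiv ℝ f) z).flip I)) z := by
  have hD := hasFDerivAt_fderiv_of_contDiffAt_two hf
  exact (((hD.clm_apply (hasFDerivAt_const 1 z)).sub
    ((hD.clm_apply (hasFDerivAt_const I z)).const_smul I)).const_mul (1 / 2 : ℂ)).congr_fderiv
    (by ext; simp)

lemma hasFDerivAt_wdzbar (hf : ContDiffAt ℝ 2 f z) :
    HasFDerivAt (wdzbar f) ((1 / 2 : ℂ) • ((fderiv ℝ (fderiv ℝ f) z).flip 1 +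
      I • (fderiv ℝ (fderiv ℝ f) z).flip I)) z := by
  have hD := hasFDerivAt_fderiv_of_contDiffAt_two hf
  exact (((hD.clm_apply (hasFDerivAt_const 1 z)).add
    ((hD.clm_apply (hasFDerivAt_const I z)).const_smul I)).const_mul (1 / 2 : ℂ)).congr_fderiv
    (by ext; simp)

/-- By symmetry of the second derivative `D`, both sides equal `(D 1 1 + D I I) / 4`. -/
lemma wdzbar_wdz_eq_wdz_wdzbar (hf : ContDiffAt ℝ 2 f z) :
    wdzbar (wdz f) z = wdz (wdzbar f) z := by
  have hsymm : fderiv ℝ (fderiv ℝ f) z I 1 = fderiv ℝ (fderiv ℝ f) z 1 I :=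
    hf.isSymmSndFDerivAt (by simp) I 1
  simp only [wdzbar, wdz, (hasFDerivAt_wdz hf).fderiv, (hasFDerivAt_wdzbar hf).fderiv,
    smul_apply, add_apply, sub_apply, ContinuousLinearMap.flip_apply, smul_eq_mul, hsymm]
  ring

end Wirtinger

lemma hasDerivAt_log_sqrt {x : ℝ} (hx : 0 < x) :
    HasDerivAt (fun t => Real.log (√t)) (1 / (2 * x)) x := by
  refine ((Real.hasDerivAt_log (Real.sqrt_pos.2 hx).ne').comp x
    (Real.hasDerivAt_sqrt hx.ne')).congr_deriv ?_
  field_simp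
  rw [Real.sq_sqrt hx.le]

section Conductivity

variable {σ : ℂ → ℝ} {F : ℂ → ℂ} {z : ℂ}

lemma sqrtC_sq (hpos : 0 ≤ σ z) : sqrtC σ z ^ 2 = σ z := by
  rw [sqrtC]
  exact_mod_cast Real.sq_sqrt hpos

lemma sqrtC_ne_zero (hpos : 0 < σ z) : sqrtC σ z ≠ 0 := by
  rw [sqrtC]
  exact_mod_cast (Real.sqrt_pos.2 hpos).ne'

lemma differentiableAt_sqrtC (hσ : DifferentiableAt ℝ σ z) (hpos : 0 < σ z) :
    DifferentiableAt ℝ (sqrtC σ) z :=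
  ofRealCLM.differentiableAt.comp z (hσ.sqrt hpos.ne')

lemma wdz_sqrtC (hσ : DifferentiableAt ℝ σ z) (hpos : 0 < σ z) :
    wdz (sqrtC σ) z = wdz (fun w => (σ w : ℂ)) z / (2 * sqrtC σ z) :=
  (wdz_ofReal_comp hσ (Real.hasDerivAt_sqrt hpos.ne')).trans (by rw [sqrtC]; push_cast; ring)

lemma wdzbar_sqrtC (hσ : DifferentiableAt ℝ σ z) (hpos : 0 < σ z) :
    wdzbar (sqrtC σ) z = wdzbar (fun w => (σ w : ℂ)) z / (2 * sqrtC σ z) :=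
  (wdzbar_ofReal_comp hσ (Real.hasDerivAt_sqrt hpos.ne')).trans (by rw [sqrtC]; push_cast; ring)

lemma wdz_log_sqrt (hσ : DifferentiableAt ℝ σ z) (hpos : 0 < σ z) :
    wdz (fun w => ((Real.log (Real.sqrt (σ w)) : ℝ) : ℂ)) z =
      wdz (fun w => (σ w : ℂ)) z / (2 * σ z) :=
  (wdz_ofReal_comp hσ (hasDerivAt_log_sqrt hpos)).trans (by push_cast; ring)

lemma wdzbar_log_sqrt (hσ : DifferentiableAt ℝ σ z) (hpos : 0 < σ z) :
    wdzbar (fun w => ((Real.log (Real.sqrt (σ w)) : ℝ) : ℂ)) z =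
      wdzbar (fun w => (σ w : ℂ)) z / (2 * σ z) :=
  (wdzbar_ofReal_comp hσ (hasDerivAt_log_sqrt hpos)).trans (by push_cast; ring)

lemma conductivity_eq_two_sqrtC_mul_firstOrder₁ (hσ : DifferentiableAt ℝ σ z)
    (hpos : 0 < σ z) (hF : ContDiffAt ℝ 2 F z) :
    wdz (fun w => (σ w : ℂ) * wdzbar F w) z + wdzbar (fun w => (σ w : ℂ) * wdz F w) z =
      2 * sqrtC σ z * (wdzbar (fun w => sqrtC σ w * wdz F w) z +
        (sqrtC σ z * wdzbar F z) * wdz (fun w => ((Real.log (Real.sqrt (σ w)) : ℝ) : ℂ)) z) := by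
  have hσc : DifferentiableAt ℝ (fun w => (σ w : ℂ)) z := ofRealCLM.differentiableAt.comp z hσ
  rw [wdz_mul hσc (hasFDerivAt_wdzbar hF).differentiableAt,
    wdzbar_mul hσc (hasFDerivAt_wdz hF).differentiableAt,
    wdzbar_mul (differentiableAt_sqrtC hσ hpos) (hasFDerivAt_wdz hF).differentiableAt,
    wdzbar_sqrtC hσ hpos, wdz_log_sqrt hσ hpos, wdzbar_wdz_eq_wdz_wdzbar hF]
  have hs := sqrtC_ne_zero hpos
  have hσ0 : (σ z : ℂ) ≠ 0 := by exact_mod_cast hpos.ne'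
  field_simp
  rw [sqrtC_sq hpos.le]
  ring

lemma conductivity_eq_two_sqrtC_mul_firstOrder₂ (hσ : DifferentiableAt ℝ σ z)
    (hpos : 0 < σ z) (hF : ContDiffAt ℝ 2 F z) :
    wdz (fun w => (σ w : ℂ) * wdzbar F w) z + wdzbar (fun w => (σ w : ℂ) * wdz F w) z =
      2 * sqrtC σ z * (wdz (fun w => sqrtC σ w * wdzbar F w) z +
        (sqrtC σ z * wdz F z) * wdzbar (fun w => ((Real.log (Real.sqrt (σ w)) : ℝ) : ℂ)) z) := by
  have hσc : DifferentiableAt ℝ (fun w => (σ w : ℂ)) z := ofRealCLM.differentiableAt.comp z hσ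
  rw [wdz_mul hσc (hasFDerivAt_wdzbar hF).differentiableAt,
    wdzbar_mul hσc (hasFDerivAt_wdz hF).differentiableAt,
    wdz_mul (differentiableAt_sqrtC hσ hpos) (hasFDerivAt_wdzbar hF).differentiableAt,
    wdz_sqrtC hσ hpos, wdzbar_log_sqrt hσ hpos, wdzbar_wdz_eq_wdz_wdzbar hF]
  have hs := sqrtC_ne_zero hpos
  have hσ0 : (σ z : ℂ) ≠ 0 := by exact_mod_cast hpos.ne'
  field_simp
  rw [sqrtC_sq hpos.le]
  ring

end Conductivity

/-- Lemma 2.1, planar case: the conductivity equation for `F` implies the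
first-order system (2.5) for `F₁ = √σ ∂F` and `F₂ = √σ ∂̄F`. -/
theorem conductivity_first_order_system_planar
    (Ω : Set ℂ) (hΩ : IsOpen Ω) (σ : ℂ → ℝ) (hσ : ContDiffOn ℝ 2 σ Ω)
    (hpos : ∀ z ∈ Ω, 0 < σ z) (F : ℂ → ℂ) (hF : ContDiffOn ℝ 2 F Ω)
    (heq : ∀ z ∈ Ω,
      wdz (fun w => (σ w : ℂ) * wdzbar F w) z +
        wdzbar (fun w => (σ w : ℂ) * wdz F w) z = 0) :
    ∀ z ∈ Ω,
      (wdzbar (fun w => sqrtC σ w * wdz F w) z +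
        (sqrtC σ z * wdzbar F z) *
          wdz (fun w => ((Real.log (Real.sqrt (σ w)) : ℝ) : ℂ)) z = 0) ∧
      (wdz (fun w => sqrtC σ w * wdzbar F w) z +
        (sqrtC σ z * wdz F z) *
          wdzbar (fun w => ((Real.log (Real.sqrt (σ w)) : ℝ) : ℂ)) z = 0) := by
  intro z hz
  have hσz : DifferentiableAt ℝ σ z :=
    (hσ.contDiffAt (hΩ.mem_nhds hz)).differentiableAt two_ne_zero
  have hFz : ContDiffAt ℝ 2 F z := hF.contDiffAt (hΩ.mem_nhds hz)
  have h2s : 2 * sqrtC σ z ≠ 0 := mul_ne_zero two_ne_zero (sqrtC_ne_zero (hpos z hz))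
  have hcond := heq z hz
  refine ⟨?_, ?_⟩
  · rw [conductivity_eq_two_sqrtC_mul_firstOrder₁ hσz (hpos z hz) hFz] at hcond
    exact (mul_eq_zero.1 hcond).resolve_left h2s
  · rw [conductivity_eq_two_sqrtC_mul_firstOrder₂ hσz (hpos z hz) hFz] at hcond
    exact (mul_eq_zero.1 hcond).resolve_left h2s
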